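/- The mutation operator M is strongly transitive on (X_N, d): for all X, Y ∈ X_N and every neighborhood V of X, there exist n ∈ ℕ and X' ∈ V such that M^n(X') = Y. -/

import Mathlib

/-- The discrete metric on ℝ: `ddelta x y = 1` if `x ≠ y`, and `0` otherwise. -/
noncomputable def ddelta (x y : ℝ) : ℝ := if x = y then 0 else 1

/-- `Fdel (x₁, x₂) = |x₁| + δ(0, x₂)`. -/
noncomputable def Fdel (x : ℝ × ℝ) : ℝ := |x.1| + ddelta 0 x.2

/-- A single mutation: a position in `{1,…,N}` together with a nucleotide in `{1,2,3,4}`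
(encoded with `Fin N` and `Fin 4`). -/
abbrev Mut (N : ℕ) := Fin N × Fin 4

/-- A mutations sequence: an infinite sequence of mutations. -/
abbrev MutSeq (N : ℕ) := ℕ → Mut N

/-- A genome of size `N`: a sequence of `N` nucleotides in `{1,2,3,4}` (encoded by `Fin 4`,
where `0,1,2,3` stand for the labels `1,2,3,4`, i.e. `A,C,G,T`). -/
abbrev Genome (N : ℕ) := Fin N → Fin 4

/-- The phase space `X_N = {1,2,3,4}^N × S_N`. -/
abbrev Phase (N : ℕ) := Genome N × MutSeq N

/-- A mutation regarded as a pair of real numbers, using the labels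
`1,…,N` for positions and `1,2,3,4` for nucleotides. -/
noncomputable def mutR {N : ℕ} (m : Mut N) : ℝ × ℝ :=
  ((m.1.1 : ℝ) + 1, (m.2.1 : ℝ) + 1)

/-- `d_G(G, Ǧ) = Σ_{k=1}^{N} δ(G_k, Ǧ_k)`, with `δ` the discrete metric. -/
noncomputable def dG {N : ℕ} (G G' : Genome N) : ℝ :=
  ∑ k : Fin N, if G k = G' k then (0 : ℝ) else 1

/-- `d_S(S, Š) = (9/N) Σ_{k=0}^{∞} F(S^k − Š^k)/10^(k+1)`. -/
noncomputable def dS {N : ℕ} (S S' : MutSeq N) : ℝ :=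
  (9 / N) * ∑' k : ℕ, Fdel (mutR (S k) - mutR (S' k)) / 10 ^ (k + 1)

/-- The distance `d((G,S), (Ǧ,Š)) = d_G(G,Ǧ) + d_S(S,Š)` on the phase space. -/
noncomputable def dX {N : ℕ} (X Y : Phase N) : ℝ := dG X.1 Y.1 + dS X.2 Y.2

/-- The mutation operator `M(G, S) = (G', σ(S))`: the nucleotide of `G` at position `(S⁰)₁`
is replaced by the nucleotide `(S⁰)₂`, and the mutations sequence is shifted. -/
noncomputable def Mop {N : ℕ} (X : Phase N) : Phase N :=
  (Function.update X.1 (X.2 0).1 (X.2 0).2, fun k => X.2 (k + 1))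

/-- A set `U ⊆ X_N` is open for the metric `d` if around any of its points it
contains an open ball of positive radius. -/
def IsOpenD {N : ℕ} (U : Set (Phase N)) : Prop :=
  ∀ x ∈ U, ∃ ε > 0, ∀ y, dX x y < ε → y ∈ U


/-!
Run `X.2` for `m` steps, then write `Y.1` one position at a time, then continue with `Y.2`;
call this sequence `S'`. Starting from `(X.1, S')`, after `m + N` mutations the genome is `Y.1`
(whatever the first `m` mutations did) and the remaining sequence is `Y.2`. Since `S'` agrees
with `X.2` on its first `m` terms and each term of `d_S` is at most `9 / 10^(k+1)`,
`d(X, (X.1, S')) ≤ 10^(-m)`, which is below any `ε > 0` for `m` large.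
-/

section

variable {N : ℕ}

def mutate (G : Genome N) (m : Mut N) : Genome N := Function.update G m.1 m.2

def prependMuts (l : List (Mut N)) (S : MutSeq N) : MutSeq N :=
  fun k => if h : k < l.length then l[k] else S (k - l.length)

def writeMuts (H : Genome N) : List (Mut N) := (List.finRange N).map fun j => (j, H j)

@[simp]
theorem prependMuts_nil (S : MutSeq N) : prependMuts [] S = S := by
  funext k
  simp [prependMuts]

theorem prependMuts_of_lt {l : List (Mut N)} {k : ℕ} (hk : k < l.length) (S : MutSeq N) :
    prependMuts l S k = l[k] :=
  dif_pos hk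

theorem Mop_prependMuts_cons (G : Genome N) (m : Mut N) (l : List (Mut N)) (S : MutSeq N) :
    Mop (G, prependMuts (m :: l) S) = (mutate G m, prependMuts l S) := by
  ext1
  · simp [Mop, mutate, prependMuts]
  · funext k
    simp [Mop, prependMuts]

theorem Mop_iterate_prependMuts (l : List (Mut N)) (G : Genome N) (S : MutSeq N) :
    Mop^[l.length] (G, prependMuts l S) = (l.foldl mutate G, S) := by
  induction l generalizing G with
  | nil => simp
  | cons m l ih =>
    rw [List.length_cons, Function.iterate_succ_apply, Mop_prependMuts_cons, ih, List.foldl_cons]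

theorem foldl_mutate_map_apply (H : Genome N) (l : List (Fin N)) (G : Genome N) (p : Fin N) :
    (l.map fun j => (j, H j)).foldl mutate G p = if p ∈ l then H p else G p := by
  induction l generalizing G with
  | nil => simp
  | cons a l ih =>
    rw [List.map_cons, List.foldl_cons, ih]
    by_cases hpa : p = a <;> simp [mutate, hpa]

theorem foldl_mutate_writeMuts (G H : Genome N) : (writeMuts H).foldl mutate G = H := by
  funext p
  simp [writeMuts, foldl_mutate_map_apply]

theorem dG_self (G : Genome N) : dG G G = 0 := by
  simp [dG]

theorem Fdel_nonneg (x : ℝ × ℝ) : 0 ≤ Fdel x := by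
  unfold Fdel ddelta
  split_ifs <;> positivity

theorem Fdel_mutR_sub_le (a b : Mut N) : Fdel (mutR a - mutR b) ≤ N := by
  have ha : (a.1 : ℝ) + 1 ≤ N := by exact_mod_cast a.1.2
  have hb : (b.1 : ℝ) + 1 ≤ N := by exact_mod_cast b.1.2
  have hposition : |((a.1 : ℝ) + 1) - ((b.1 : ℝ) + 1)| ≤ N - 1 := by
    have ha₀ : (0 : ℝ) ≤ a.1 := Nat.cast_nonneg _
    have hb₀ : (0 : ℝ) ≤ b.1 := Nat.cast_nonneg _
    rw [abs_le]; constructor <;> linarith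
  have hnucleotide : ddelta 0 ((a.2 : ℝ) + 1 - ((b.2 : ℝ) + 1)) ≤ 1 := by
    unfold ddelta; split_ifs <;> norm_num
  simp only [Fdel, mutR, Prod.fst_sub, Prod.snd_sub]
  linarith

theorem tsum_le_of_le_geometric_of_eq_zero {f : ℕ → ℝ} {C r : ℝ} {m : ℕ} (hr₀ : 0 ≤ r)
    (hr₁ : r < 1) (hf₀ : ∀ k, 0 ≤ f k) (hf : ∀ k, f k ≤ C * r ^ k) (hzero : ∀ k < m, f k = 0) :
    ∑' k, f k ≤ C * r ^ m / (1 - r) := by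
  have hs : Summable f := ((summable_geometric_of_lt_one hr₀ hr₁).mul_left C).of_nonneg_of_le hf₀ hf
  calc ∑' k, f k = ∑' k, f (k + m) := by
        rw [← hs.sum_add_tsum_nat_add m,
          Finset.sum_eq_zero fun k hk => hzero k (Finset.mem_range.1 hk), zero_add]
    _ ≤ ∑' k, C * r ^ m * r ^ k := by
        refine ((summable_nat_add_iff m).2 hs).tsum_le_tsum (fun k => ?_)
          ((summable_geometric_of_lt_one hr₀ hr₁).mul_left _)
        calc f (k + m) ≤ C * r ^ (k + m) := hf _
          _ = C * r ^ m * r ^ k := by ring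
    _ = C * r ^ m / (1 - r) := by
        rw [tsum_mul_left, tsum_geometric_of_lt_one hr₀ hr₁, div_eq_mul_inv]

theorem dS_le_of_forall_lt_eq {S S' : MutSeq N} {m : ℕ} (h : ∀ k < m, S k = S' k) :
    dS S S' ≤ 10⁻¹ ^ m := by
  have hN : (0 : ℝ) < N := Nat.cast_pos.2 (S 0).1.pos
  have key : ∑' k, Fdel (mutR (S k) - mutR (S' k)) / 10 ^ (k + 1) ≤
      N / 10 * 10⁻¹ ^ m / (1 - 10⁻¹) := by
    refine tsum_le_of_le_geometric_of_eq_zero (by norm_num) (by norm_num)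
      (fun k => div_nonneg (Fdel_nonneg _) (by positivity)) (fun k => ?_) (fun k hk => ?_)
    · calc Fdel (mutR (S k) - mutR (S' k)) / 10 ^ (k + 1) ≤ N / 10 ^ (k + 1) := by
            gcongr; exact Fdel_mutR_sub_le _ _
        _ = N / 10 * 10⁻¹ ^ k := by rw [pow_succ, inv_pow]; ring
    · simp [h k hk, Fdel, ddelta]
  calc dS S S' ≤ 9 / N * (N / 10 * 10⁻¹ ^ m / (1 - 10⁻¹)) := by
        unfold dS; gcongr
    _ = 10⁻¹ ^ m := by field_simp; norm_num

end

theorem Mop_strongly_transitive_general (N : ℕ) :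
    ∀ X Y : Phase N, ∀ ε > (0 : ℝ),
      ∃ n : ℕ, ∃ X' : Phase N, dX X X' < ε ∧ (Mop (N := N))^[n] X' = Y := by
  intro X Y ε hε
  obtain ⟨m, hm⟩ := exists_pow_lt_of_lt_one hε (by norm_num : (10 : ℝ)⁻¹ < 1)
  set past := List.ofFn fun k : Fin m => X.2 k
  refine ⟨(writeMuts Y.1).length + past.length,
    (X.1, prependMuts past (prependMuts (writeMuts Y.1) Y.2)), ?_, ?_⟩
  · have hagree : ∀ k < m, X.2 k = prependMuts past (prependMuts (writeMuts Y.1) Y.2) k :=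
      fun k hk => by
        rw [prependMuts_of_lt (by simpa [past] using hk)]
        simp [past]
    calc dX X _ = dS X.2 _ := by rw [dX, dG_self, zero_add]
      _ ≤ 10⁻¹ ^ m := dS_le_of_forall_lt_eq hagree
      _ < ε := hm
  · rw [Function.iterate_add_apply, Mop_iterate_prependMuts, Mop_iterate_prependMuts,
      foldl_mutate_writeMuts]

/-- The mutation operator `M` is strongly transitive on `(X_N, d)`: for all `X, Y ∈ X_N`
and every neighborhood of `X` (i.e. every open ball `B(X, ε)`, `ε > 0`), there exist
`n ∈ ℕ` and a point `X'` of this neighborhood such that `M^n(X') = Y`. -/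
theorem Mop_strongly_transitive (N : ℕ) (hN : 1 ≤ N) :
    ∀ X Y : Phase N, ∀ ε > (0 : ℝ),
      ∃ n : ℕ, ∃ X' : Phase N, dX X X' < ε ∧ (Mop (N := N))^[n] X' = Y :=
  Mop_strongly_transitive_general N
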